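/- The rotation distance between the left caterpillar and the right caterpillar on n internal nodes is exactly n - 1. -/

import Mathlib

inductive BT : Type
  | leaf : BT
  | node : BT → BT → BT
deriving DecidableEq

namespace BT

/-- number of internal nodes -/
def size : BT → ℕ
  | leaf => 0
  | node l r => size l + size r + 1

/-- number of leaves -/
def nl (t : BT) : ℕ := size t + 1

/-- one (right) rotation somewhere in the tree -/
inductive Rot : BT → BT → Prop
  | root (a b c : BT) : Rot (node (node a b) c) (node a (node b c))
  | congrL {l l' : BT} (r : BT) : Rot l l' → Rot (node l r) (node l' r)
  | congrR (l : BT) {r r' : BT} : Rot r r' → Rot (node l r) (node l r')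

/-- a rotation move: a right rotation or its inverse (a left rotation) -/
def Move (s t : BT) : Prop := Rot s t ∨ Rot t s

/-- `Chain n s t`: `s` is transformed into `t` by `n` rotation moves -/
inductive Chain : ℕ → BT → BT → Prop
  | refl (t : BT) : Chain 0 t t
  | step {n : ℕ} {s u t : BT} : Move s u → Chain n u t → Chain (n + 1) s t

/-- rotation distance -/
noncomputable def dR (s t : BT) : ℕ := sInf {n | Chain n s t}

def isNode : BT → Bool
  | leaf => false
  | node _ _ => true

/-- the multiset of leaf partitions induced by internal edges, where the leaves of the
tree are numbered from `k` on, left to right; each internal edge is recorded by the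
set of leaf numbers below it. -/
def iparts : BT → ℕ → Multiset (Finset ℕ)
  | leaf, _ => 0
  | node l r, k =>
      ((if isNode l then {Finset.Ico k (k + nl l)} else 0) + iparts l k)
        + ((if isNode r then {Finset.Ico (k + nl l) (k + nl l + nl r)} else 0)
            + iparts r (k + nl l))

/-- number of common edge pairs -/
def commonEdges (s t : BT) : ℕ := ((iparts s 0) ∩ (iparts t 0)).card

/-- the right caterpillar: every internal node's left child is a leaf -/
def rightCat : ℕ → BT
  | 0 => leaf
  | n + 1 => node leaf (rightCat n)

/-- the left caterpillar: every internal node's right child is a leaf -/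
def leftCat : ℕ → BT
  | 0 => leaf
  | n + 1 => node (leftCat n) leaf

/-!
Rotating at the root of `node (leftCat k) (rightCat m)` gives `node (leftCat (k - 1)) (rightCat (m + 1))`,
so `n - 1` rotations carry the left caterpillar to the right one. Conversely, a rotation changes the
depth of the rightmost leaf by at most one, and that depth is `1` in the left caterpillar and `n` in the
right one.
-/

def rightDepth : BT → ℕ
  | leaf => 0
  | node _ r => rightDepth r + 1

theorem Rot.rightDepth_le_succ {s t : BT} (h : Rot s t) : rightDepth t ≤ rightDepth s + 1 := by
  induction h with
  | root => simp [rightDepth]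
  | congrL => simp [rightDepth]
  | congrR _ _ ih => simpa [rightDepth] using ih

theorem Rot.rightDepth_le {s t : BT} (h : Rot s t) : rightDepth s ≤ rightDepth t := by
  induction h with
  | root => simp [rightDepth]
  | congrL => simp [rightDepth]
  | congrR _ _ ih => simpa [rightDepth] using ih

theorem Move.rightDepth_le_succ {s t : BT} (h : Move s t) : rightDepth t ≤ rightDepth s + 1 := by
  rcases h with h | h
  · exact h.rightDepth_le_succ
  · exact h.rightDepth_le.trans (Nat.le_succ _)

theorem Chain.rightDepth_le_add {m : ℕ} {s t : BT} (h : Chain m s t) :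
    rightDepth t ≤ rightDepth s + m := by
  induction h with
  | refl => simp
  | step hmove _ ih => have := hmove.rightDepth_le_succ; omega

theorem dR_le {m : ℕ} {s t : BT} (h : Chain m s t) : dR s t ≤ m :=
  Nat.sInf_le h

theorem chain_dR {m : ℕ} {s t : BT} (h : Chain m s t) : Chain (dR s t) s t :=
  Nat.sInf_mem (s := {n | Chain n s t}) ⟨m, h⟩

theorem rightDepth_rightCat (n : ℕ) : rightDepth (rightCat n) = n := by
  induction n with
  | zero => rfl
  | succ k ih => simp [rightCat, rightDepth, ih]

theorem rightDepth_leftCat_le_one (n : ℕ) : rightDepth (leftCat n) ≤ 1 := by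
  cases n <;> simp [leftCat, rightDepth]

theorem chain_node_leftCat_rightCat (k m : ℕ) :
    Chain k (node (leftCat k) (rightCat m)) (rightCat (m + k + 1)) := by
  induction k generalizing m with
  | zero => exact Chain.refl _
  | succ k ih =>
      have hrest : Chain k (node (leftCat k) (rightCat (m + 1))) (rightCat (m + (k + 1) + 1)) := by
        simpa only [Nat.add_right_comm m 1 k, Nat.add_assoc m k 1] using ih (m + 1)
      exact Chain.step (Or.inl (Rot.root (leftCat k) leaf (rightCat m))) hrest

theorem chain_leftCat_rightCat (n : ℕ) : Chain (n - 1) (leftCat n) (rightCat n) := by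
  cases n with
  | zero => exact Chain.refl _
  | succ k => simpa [leftCat, rightCat] using chain_node_leftCat_rightCat k 0

theorem caterpillar_distance (n : ℕ) :
    dR (leftCat n) (rightCat n) = n - 1 := by
  have hchain := chain_leftCat_rightCat n
  have hupper := dR_le hchain
  have hlower := (chain_dR hchain).rightDepth_le_add
  have hleft := rightDepth_leftCat_le_one n
  rw [rightDepth_rightCat] at hlower
  omega

end BT
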